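/- arXiv:2212.06372 — 6 statements merged into one kernel-verified Lean document; each statement's English description precedes it below -/
import Mathlib

section
/- If non-negative integers n1 ≥ n2 ≥ 0 and a1 ≥ a2 ≥ a3 ≥ 0 with n1 > 1 satisfy B_{n1} + B_{n2} = 2^{a1} + 2^{a2} + 2^{a3}, then n1 − 1 < (log 3)/(log α) + a1·(log 2)/(log α), where α = 3 + 2√2. -/
/-- The balancing numbers: `B 0 = 0`, `B 1 = 1`, `B (n+2) = 6 * B (n+1) - B n`. -/
def balancing : ℕ → ℤ
  | 0 => 0
  | 1 => 1
  | n + 2 => 6 * balancing (n + 1) - balancing n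

lemma balancing_aux : ∀ n, 0 ≤ balancing n ∧ balancing n ≤ balancing (n + 1)
  | 0 => by norm_num [balancing]
  | n + 1 => by
    obtain ⟨h1, h2⟩ := balancing_aux n
    have h3 : 0 ≤ balancing (n + 1) := le_trans h1 h2
    refine ⟨h3, ?_⟩
    show balancing (n + 1) ≤ balancing (n + 2)
    rw [balancing]
    linarith

lemma balancing_nonneg (n : ℕ) : 0 ≤ balancing n := (balancing_aux n).1

noncomputable def alp : ℝ := 3 + 2 * Real.sqrt 2

lemma sqrt2_sq : Real.sqrt 2 ^ 2 = 2 := Real.sq_sqrt (by norm_num)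

lemma sqrt2_gt : 1 < Real.sqrt 2 := by
  nlinarith [Real.sqrt_nonneg 2, sqrt2_sq]

lemma alp_lt_six : alp < 6 := by
  have h := sqrt2_sq
  have h0 := Real.sqrt_nonneg 2
  unfold alp
  nlinarith

lemma alp_gt_one : 1 < alp := by
  have := sqrt2_gt
  unfold alp
  linarith

lemma alp_eq : alp ^ 2 = 6 * alp - 1 := by
  have h := sqrt2_sq
  unfold alp
  nlinarith

lemma balancing_key : ∀ n, alp * (balancing (n + 1) : ℝ) ≤ (balancing (n + 2) : ℝ)
  | 0 => by
    norm_num [balancing]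
    linarith [alp_lt_six]
  | n + 1 => by
    have ih := balancing_key n
    have hB : (balancing (n + 3) : ℝ) = 6 * (balancing (n + 2) : ℝ) - (balancing (n + 1) : ℝ) := by
      rw [show n + 3 = (n + 1) + 2 from rfl, balancing]
      push_cast; ring
    have h6 : (0 : ℝ) < 6 - alp := by linarith [alp_lt_six]
    have e : (6 - alp) * alp = 1 := by linear_combination -alp_eq
    have h7 : (balancing (n + 1) : ℝ) ≤ (6 - alp) * (balancing (n + 2) : ℝ) := by
      calc (balancing (n + 1) : ℝ) = (6 - alp) * alp * (balancing (n + 1) : ℝ) := by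
            rw [e]; ring
        _ = (6 - alp) * (alp * (balancing (n + 1) : ℝ)) := by ring
        _ ≤ (6 - alp) * (balancing (n + 2) : ℝ) := mul_le_mul_of_nonneg_left ih (le_of_lt h6)
    rw [hB]
    nlinarith [h7]

lemma balancing_lower : ∀ n, alp ^ (n + 1) < (balancing (n + 2) : ℝ)
  | 0 => by
    norm_num [balancing]
    linarith [alp_lt_six]
  | n + 1 => by
    have ih := balancing_lower n
    have hk := balancing_key (n + 1)
    have ha : (0 : ℝ) < alp := by linarith [alp_gt_one]
    calc alp ^ (n + 2) = alp * alp ^ (n + 1) := by ring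
      _ < alp * (balancing (n + 2) : ℝ) := by
          exact mul_lt_mul_of_pos_left ih ha
      _ ≤ (balancing (n + 3) : ℝ) := hk

theorem balancing_upper_bound_n1 (n1 n2 a1 a2 a3 : ℕ)
    (hn : n2 ≤ n1) (ha12 : a2 ≤ a1) (ha23 : a3 ≤ a2) (hn1 : 1 < n1)
    (heq : balancing n1 + balancing n2 = 2 ^ a1 + 2 ^ a2 + 2 ^ a3) :
    (n1 : ℝ) - 1 <
      Real.log 3 / Real.log (3 + 2 * Real.sqrt 2) +
        a1 * (Real.log 2 / Real.log (3 + 2 * Real.sqrt 2)) := by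
  obtain ⟨m, rfl⟩ : ∃ m, n1 = m + 2 := ⟨n1 - 2, by omega⟩
  have ha : (1 : ℝ) < alp := alp_gt_one
  have hap : (0 : ℝ) < alp := by linarith
  -- integer upper bound
  have hz : balancing (m + 2) ≤ 3 * 2 ^ a1 := by
    have h1 := balancing_nonneg n2
    have h2 : (2 : ℤ) ^ a2 ≤ 2 ^ a1 := pow_le_pow_right₀ (by norm_num) ha12
    have h3 : (2 : ℤ) ^ a3 ≤ 2 ^ a1 := pow_le_pow_right₀ (by norm_num) (le_trans ha23 ha12)
    linarith
  have hr : (balancing (m + 2) : ℝ) ≤ 3 * 2 ^ a1 := by exact_mod_cast hz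
  have hlow := balancing_lower m
  have hlt : alp ^ (m + 1) < 3 * 2 ^ a1 := lt_of_lt_of_le hlow hr
  have hpos : (0 : ℝ) < alp ^ (m + 1) := pow_pos hap _
  have hlog := Real.log_lt_log hpos hlt
  rw [Real.log_pow, Real.log_mul (by norm_num) (by positivity), Real.log_pow] at hlog
  have hLa : 0 < Real.log alp := Real.log_pos ha
  have key : ((m : ℝ) + 1) < (Real.log 3 + a1 * Real.log 2) / Real.log alp := by
    rw [lt_div_iff₀ hLa]
    push_cast at hlog ⊢
    linarith
  have hrw : Real.log 3 / Real.log alp + a1 * (Real.log 2 / Real.log alp)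
      = (Real.log 3 + a1 * Real.log 2) / Real.log alp := by ring
  show (↑(m + 2) : ℝ) - 1 < Real.log 3 / Real.log alp + a1 * (Real.log 2 / Real.log alp)
  rw [hrw]
  push_cast
  linarith
end

section
/- If non-negative integers n1 ≥ n2 ≥ 0 and a1 ≥ a2 ≥ a3 ≥ 0 with n1 > 1 satisfy B_{n1} + B_{n2} = 2^{a1} + 2^{a2} + 2^{a3}, then n1 > (a1 − 1)·(log 2)/(log α), where α = 3 + 2√2. -/
noncomputable def balAlpha : ℝ := 3 + 2 * Real.sqrt 2

lemma sqrt2_lt : Real.sqrt 2 < 1.5 := by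
  rw [show (1.5:ℝ) = Real.sqrt (1.5^2) by rw [Real.sqrt_sq]; norm_num]
  exact Real.sqrt_lt_sqrt (by norm_num) (by norm_num)

lemma alpha_gt_one : 1 < balAlpha := by
  have := sqrt2_gt; unfold balAlpha; nlinarith

lemma alpha_id : balAlpha * (6 - balAlpha) = 1 := by
  have : Real.sqrt 2 ^ 2 = 2 := Real.sq_sqrt (by norm_num)
  unfold balAlpha; nlinarith

lemma alpha_lt_six : balAlpha < 6 := by
  have := sqrt2_lt; unfold balAlpha; nlinarith

lemma bal_step : ∀ n : ℕ, (balancing (n+1) : ℝ) ≤ balAlpha * balancing n + 1 := by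
  intro n
  induction n with
  | zero => simp [balancing]
  | succ n ih =>
    have hpos : 0 < balAlpha := lt_trans one_pos alpha_gt_one
    have h6 : 0 < 6 - balAlpha := by linarith [alpha_lt_six]
    have key : (balancing (n+1) : ℝ) ≤ balAlpha * (balancing n + 1) := by
      calc (balancing (n+1) : ℝ) ≤ balAlpha * balancing n + 1 := ih
        _ ≤ balAlpha * balancing n + balAlpha := by linarith [alpha_gt_one]
        _ = balAlpha * (balancing n + 1) := by ring
    have : (6 - balAlpha) * (balancing (n+1) : ℝ) ≤ (balancing n : ℝ) + 1 := by
      have := mul_le_mul_of_nonneg_left key (le_of_lt h6)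
      calc (6 - balAlpha) * (balancing (n+1) : ℝ) ≤ (6 - balAlpha) * (balAlpha * (balancing n + 1)) := this
        _ = (balAlpha * (6 - balAlpha)) * (balancing n + 1) := by ring
        _ = (balancing n : ℝ) + 1 := by rw [alpha_id]; ring
    have hrec : (balancing (n+2) : ℝ) = 6 * balancing (n+1) - balancing n := by
      show ((balancing (n+2) : ℤ) : ℝ) = _
      rw [show balancing (n+2) = 6 * balancing (n+1) - balancing n from rfl]
      push_cast; ring
    rw [hrec]; nlinarith

lemma bal_bound : ∀ n : ℕ, (balancing n : ℝ) ≤ balAlpha ^ n - 1 := by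
  intro n
  induction n with
  | zero => simp [balancing]
  | succ n ih =>
    have hpos : 0 < balAlpha := lt_trans one_pos alpha_gt_one
    calc (balancing (n+1) : ℝ) ≤ balAlpha * balancing n + 1 := bal_step n
      _ ≤ balAlpha * (balAlpha ^ n - 1) + 1 := by nlinarith
      _ = balAlpha ^ (n+1) - balAlpha + 1 := by ring
      _ ≤ balAlpha ^ (n+1) - 1 := by
          have h2le : (2:ℝ) ≤ balAlpha := by
            have := sqrt2_gt; unfold balAlpha; nlinarith
          linarith

theorem balancing_lower_bound_n1 (n1 n2 a1 a2 a3 : ℕ)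
    (hn : n2 ≤ n1) (ha12 : a2 ≤ a1) (ha23 : a3 ≤ a2) (hn1 : 1 < n1)
    (heq : balancing n1 + balancing n2 = 2 ^ a1 + 2 ^ a2 + 2 ^ a3) :
    (n1 : ℝ) > ((a1 : ℝ) - 1) * (Real.log 2 / Real.log (3 + 2 * Real.sqrt 2)) := by
  have hα1 : 1 < balAlpha := alpha_gt_one
  have hαpos : 0 < balAlpha := lt_trans one_pos hα1
  have hlogα : 0 < Real.log balAlpha := Real.log_pos hα1
  have hlog2 : 0 < Real.log 2 := Real.log_pos (by norm_num)
  -- real version of heq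
  have heqR : (balancing n1 : ℝ) + (balancing n2 : ℝ) = 2 ^ a1 + 2 ^ a2 + 2 ^ a3 := by
    have := congrArg (fun z : ℤ => (z : ℝ)) heq
    push_cast at this; linarith
  have h1 : (2:ℝ) ^ a1 ≤ (balancing n1 : ℝ) + (balancing n2 : ℝ) := by
    rw [heqR]
    have : (0:ℝ) < 2 ^ a2 := by positivity
    have : (0:ℝ) < 2 ^ a3 := by positivity
    linarith
  have h2 : (balancing n1 : ℝ) + (balancing n2 : ℝ) < 2 * balAlpha ^ n1 := by
    have b1 := bal_bound n1
    have b2 := bal_bound n2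
    have hmono : balAlpha ^ n2 ≤ balAlpha ^ n1 := pow_le_pow_right₀ (le_of_lt hα1) hn
    linarith
  have hkey : (2:ℝ) ^ a1 < 2 * balAlpha ^ n1 := lt_of_le_of_lt h1 h2
  -- take logs
  have hlogs : (a1 : ℝ) * Real.log 2 < Real.log 2 + (n1 : ℝ) * Real.log balAlpha := by
    have hl := Real.log_lt_log (by positivity) hkey
    rw [Real.log_pow, Real.log_mul (by norm_num) (by positivity), Real.log_pow] at hl
    exact_mod_cast hl
  have hfinal : ((a1 : ℝ) - 1) * Real.log 2 < (n1 : ℝ) * Real.log balAlpha := by linarith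
  rw [show (3 + 2 * Real.sqrt 2 : ℝ) = balAlpha from rfl]
  rw [gt_iff_lt, mul_div_assoc', div_lt_iff₀ hlogα]
  linarith
end

section
/- If non-negative integers n1 ≥ n2 ≥ 0 and a1 ≥ a2 ≥ a3 ≥ 0 with n1 > 100 satisfy B_{n1} + B_{n2} = 2^{a1} + 2^{a2} + 2^{a3}, then |α^{n1}·2^{−a1}/(4√2) − 1| < 43.72 · max{2^{a2−a1}, α^{n2−n1}}, where α = 3 + 2√2. -/
lemma bal_nonneg_mono : ∀ n, 0 ≤ balancing n ∧ balancing n ≤ balancing (n+1) := by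
  intro n
  induction n with
  | zero => simp [balancing]
  | succ k ih =>
    have h2 : balancing (k+2) = 6 * balancing (k+1) - balancing k := rfl
    constructor
    · linarith [ih.1, ih.2]
    · rw [h2]; linarith [ih.1, ih.2]

lemma bal_closed (n : ℕ) :
    (balancing n : ℝ) * (4 * Real.sqrt 2) =
      (3 + 2 * Real.sqrt 2) ^ n - (3 - 2 * Real.sqrt 2) ^ n := by
  have hs2 : Real.sqrt 2 ^ 2 = 2 := Real.sq_sqrt (by norm_num)
  induction n using Nat.twoStepInduction with
  | zero =>   simp [balancing]
  | one =>   simp [balancing]; ring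
  | more k ih1 ih2 =>
    have h2 : balancing (k+2) = 6 * balancing (k+1) - balancing k := rfl
    rw [h2]
    push_cast
    have hα2 : (3 + 2 * Real.sqrt 2)^2 = 6 * (3 + 2 * Real.sqrt 2) - 1 := by nlinarith [hs2]
    have hβ2 : (3 - 2 * Real.sqrt 2)^2 = 6 * (3 - 2 * Real.sqrt 2) - 1 := by nlinarith [hs2]
    linear_combination 6 * ih2 - ih1 + (3 + 2*Real.sqrt 2)^k * hα2 - (3 - 2*Real.sqrt 2)^k * hβ2 + 8*((3 - 2*Real.sqrt 2)^k - (3 + 2*Real.sqrt 2)^k) * hs2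

set_option maxHeartbeats 1000000 in
theorem balancing_linear_form_bound_one (n1 n2 a1 a2 a3 : ℕ)
    (hn : n2 ≤ n1) (ha12 : a2 ≤ a1) (ha23 : a3 ≤ a2) (hn1 : 100 < n1)
    (heq : balancing n1 + balancing n2 = 2 ^ a1 + 2 ^ a2 + 2 ^ a3) :
    |(3 + 2 * Real.sqrt 2) ^ n1 * (2 : ℝ) ^ (-(a1 : ℤ)) / (4 * Real.sqrt 2) - 1| <
      43.72 * max ((2 : ℝ) ^ ((a2 : ℤ) - a1)) ((3 + 2 * Real.sqrt 2) ^ ((n2 : ℤ) - n1)) := by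
  set s := Real.sqrt 2 with hs_def
  have hs2 : s ^ 2 = 2 := Real.sq_sqrt (by norm_num)
  have hs0 : 0 ≤ s := Real.sqrt_nonneg 2
  have hs1 : 1 < s := by nlinarith
  have hs15 : s < 1.5 := by nlinarith
  set α : ℝ := 3 + 2 * s with hα_def
  set β : ℝ := 3 - 2 * s with hβ_def
  have hαpos : (0:ℝ) < α := by rw [hα_def]; nlinarith
  have hβpos : (0:ℝ) < β := by rw [hβ_def]; nlinarith
  have hβ1 : β ≤ 1 := by rw [hβ_def]; nlinarith
  have hA1pos : (0:ℝ) < 2 ^ a1 := by positivity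
  have hA1ge : (1:ℝ) ≤ 2 ^ a1 := one_le_pow₀ (by norm_num)
  have hA2ge : (1:ℝ) ≤ 2 ^ a2 := one_le_pow₀ (by norm_num)
  have hαn1pos : (0:ℝ) < α ^ n1 := by positivity
  set M : ℝ := max ((2 : ℝ) ^ ((a2 : ℤ) - a1)) (α ^ ((n2 : ℤ) - n1)) with hM_def
  have hM1 : (2:ℝ) ^ a2 / 2 ^ a1 ≤ M := by
    have h : (2:ℝ) ^ ((a2:ℤ) - a1) = 2 ^ a2 / 2 ^ a1 := by
      rw [zpow_sub₀ (by norm_num : (2:ℝ) ≠ 0), zpow_natCast, zpow_natCast]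
    rw [hM_def, ← h]; exact le_max_left _ _
  have hM2 : α ^ n2 / α ^ n1 ≤ M := by
    have h : α ^ ((n2:ℤ) - n1) = α ^ n2 / α ^ n1 := by
      rw [zpow_sub₀ (ne_of_gt hαpos), zpow_natCast, zpow_natCast]
    rw [hM_def, ← h]; exact le_max_right _ _
  have hMpos : 0 < M := lt_of_lt_of_le (by positivity) hM1
  have hc1 := bal_closed n1
  have hc2 := bal_closed n2
  rw [← hα_def, ← hβ_def, ← hs_def] at hc1 hc2
  have heqR : (balancing n1 : ℝ) + balancing n2 = 2 ^ a1 + 2 ^ a2 + 2 ^ a3 := by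
    exact_mod_cast heq
  have hBn2nn : (0:ℝ) ≤ (balancing n2 : ℝ) := by exact_mod_cast (bal_nonneg_mono n2).1
  have hβn1 : (0:ℝ) < β ^ n1 := by positivity
  have hβn1le : β ^ n1 ≤ 1 := pow_le_one₀ (le_of_lt hβpos) hβ1
  have hβn2 : (0:ℝ) < β ^ n2 := by positivity
  have ha3pos : (0:ℝ) < 2 ^ a3 := by positivity
  have ha3le : (2:ℝ) ^ a3 ≤ 2 ^ a2 := pow_le_pow_right₀ (by norm_num) ha23
  have ha2le : (2:ℝ) ^ a2 ≤ 2 ^ a1 := pow_le_pow_right₀ (by norm_num) ha12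
  have hBn1le : (balancing n1 : ℝ) ≤ 3 * 2 ^ a1 := by linarith
  have h4s : (1:ℝ) ≤ 4 * (s * 2 ^ a1) := by nlinarith
  have h1 : (balancing n1 : ℝ) * (4 * s) ≤ 12 * (s * 2 ^ a1) := by nlinarith
  have hαbd : α ^ n1 ≤ 16 * (s * 2 ^ a1) := by linarith
  have hBn2le : (balancing n2 : ℝ) * (4 * s) ≤ α ^ n2 := by linarith
  have hαn2 : α ^ n2 ≤ M * α ^ n1 := by
    rw [div_le_iff₀ hαn1pos] at hM2; linarith
  have hm : M * α ^ n1 ≤ M * (16 * (s * 2 ^ a1)) :=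
    mul_le_mul_of_nonneg_left hαbd hMpos.le
  have h2 : (balancing n2 : ℝ) * (4 * s) ≤ 16 * (s * 2 ^ a1) * M := by linarith
  have hBn2M : (balancing n2 : ℝ) ≤ 4 * (M * 2 ^ a1) := by
    have h4sp : (0:ℝ) < 4 * s := by linarith
    refine le_of_mul_le_mul_right ?_ h4sp
    linarith
  have h2a2M : (2:ℝ) ^ a2 ≤ M * 2 ^ a1 := by
    rw [div_le_iff₀ hA1pos] at hM1; linarith
  have h1M : (1:ℝ) ≤ M * 2 ^ a1 := le_trans hA2ge h2a2M
  set N : ℝ := α ^ n1 / (4 * s) - 2 ^ a1 with hN_def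
  have h4sp : (0:ℝ) < 4 * s := by linarith
  have hA : α ^ n1 / (4 * s) = (balancing n1 : ℝ) + β ^ n1 / (4 * s) := by
    field_simp
    linarith [hc1]
  have hNeq : N = 2 ^ a2 + 2 ^ a3 - (balancing n2 : ℝ) + β ^ n1 / (4 * s) := by
    rw [hN_def, hA]; linarith
  have hβdiv : β ^ n1 / (4 * s) ≤ 1 := by
    rw [div_le_one h4sp]; nlinarith
  have hβdivnn : 0 ≤ β ^ n1 / (4 * s) := by positivity
  have hNbd : |N| ≤ 7 * (M * 2 ^ a1) := by
    rw [abs_le]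
    constructor <;> rw [hNeq] <;> linarith
  have hL : α ^ n1 * (2 : ℝ) ^ (-(a1 : ℤ)) / (4 * s) - 1 = N / 2 ^ a1 := by
    rw [hN_def, zpow_neg, zpow_natCast]
    field_simp
  rw [hL, abs_div, abs_of_pos hA1pos, div_lt_iff₀ hA1pos]
  nlinarith [hNbd, mul_pos hMpos hA1pos]
end

section
/- If non-negative integers n1 ≥ n2 ≥ 0 and a1 ≥ a2 ≥ a3 ≥ 0 with n1 > 100 satisfy B_{n1} + B_{n2} = 2^{a1} + 2^{a2} + 2^{a3}, then |1 − α^{−n1}·2^{a1}·4√2·(1 + 2^{a2−a1} + 2^{a3−a1})| < 1.7 · α^{n2−n1}, where α = 3 + 2√2. -/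
lemma rec_pow (x : ℝ) (hx : x ^ 2 = 6 * x - 1) (m : ℕ) :
    x ^ (m + 2) = 6 * x ^ (m + 1) - x ^ m := by
  have h : x ^ (m + 2) = x ^ m * x ^ 2 := by ring
  rw [h, hx]; ring

lemma binet (n : ℕ) :
    ((balancing n : ℤ) : ℝ) * (4 * Real.sqrt 2) =
      (3 + 2 * Real.sqrt 2) ^ n - (3 - 2 * Real.sqrt 2) ^ n := by
  have hs : Real.sqrt 2 ^ 2 = 2 := Real.sq_sqrt (by norm_num)
  induction n using Nat.strong_induction_on with
  | _ n ih =>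
    match n with
    | 0 => simp [balancing]
    | 1 => simp only [balancing]; push_cast; ring
    | (m+2) =>
      have h1 := ih (m+1) (by omega)
      have h0 := ih m (by omega)
      have ha := rec_pow (3 + 2 * Real.sqrt 2) (by nlinarith [hs]) m
      have hb := rec_pow (3 - 2 * Real.sqrt 2) (by nlinarith [hs]) m
      show ((6 * balancing (m+1) - balancing m : ℤ) : ℝ) * _ = _
      push_cast
      rw [ha, hb]
      nlinarith [h1, h0]

theorem balancing_linear_form_bound_1A (n1 n2 a1 a2 a3 : ℕ)
    (hn : n2 ≤ n1) (ha12 : a2 ≤ a1) (ha23 : a3 ≤ a2) (hn1 : 100 < n1)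
    (heq : balancing n1 + balancing n2 = 2 ^ a1 + 2 ^ a2 + 2 ^ a3) :
    |1 - (3 + 2 * Real.sqrt 2) ^ (-(n1 : ℤ)) * 2 ^ a1 * (4 * Real.sqrt 2) *
        (1 + (2 : ℝ) ^ ((a2 : ℤ) - a1) + (2 : ℝ) ^ ((a3 : ℤ) - a1))| <
      1.7 * (3 + 2 * Real.sqrt 2) ^ ((n2 : ℤ) - n1) := by
  set s := Real.sqrt 2 with hsdef
  have hs : s ^ 2 = 2 := Real.sq_sqrt (by norm_num)
  have hspos : 0 < s := Real.sqrt_pos.mpr (by norm_num)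
  set α : ℝ := 3 + 2 * s with hαdef
  have hα1 : 1 < α := by simp only [hαdef]; nlinarith
  have hαpos : 0 < α := by linarith
  have hαne : α ≠ 0 := ne_of_gt hαpos
  have hβ : (3 - 2 * s) = α⁻¹ := eq_inv_of_mul_eq_one_left (by nlinarith)
  -- combine powers of 2
  have h2 : (2:ℝ) ^ a1 * (1 + (2:ℝ) ^ ((a2:ℤ) - a1) + (2:ℝ) ^ ((a3:ℤ) - a1))
      = 2 ^ a1 + 2 ^ a2 + 2 ^ a3 := by
    have e2 : ((2:ℝ) ^ a1) * (2:ℝ) ^ ((a2:ℤ) - a1) = 2 ^ a2 := by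
      rw [← zpow_natCast (2:ℝ) a1, ← zpow_add₀ (by norm_num : (2:ℝ) ≠ 0)]
      rw [show (a1:ℤ) + ((a2:ℤ) - a1) = (a2:ℤ) by ring, zpow_natCast]
    have e3 : ((2:ℝ) ^ a1) * (2:ℝ) ^ ((a3:ℤ) - a1) = 2 ^ a3 := by
      rw [← zpow_natCast (2:ℝ) a1, ← zpow_add₀ (by norm_num : (2:ℝ) ≠ 0)]
      rw [show (a1:ℤ) + ((a3:ℤ) - a1) = (a3:ℤ) by ring, zpow_natCast]
    rw [mul_add, mul_add, mul_one, e2, e3]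
  have hBsum : ((balancing n1 : ℤ) : ℝ) + ((balancing n2 : ℤ) : ℝ)
      = 2 ^ a1 + 2 ^ a2 + 2 ^ a3 := by exact_mod_cast congrArg (Int.cast : ℤ → ℝ) heq
  have hbin1 := binet n1
  have hbin2 := binet n2
  rw [hβ] at hbin1 hbin2
  -- the linear form
  have key : 1 - α ^ (-(n1 : ℤ)) * 2 ^ a1 * (4 * s) *
        (1 + (2:ℝ) ^ ((a2:ℤ) - a1) + (2:ℝ) ^ ((a3:ℤ) - a1))
      = α ^ (-(2 * n1 : ℤ)) + α ^ (-((n1:ℤ) + n2)) - α ^ ((n2:ℤ) - n1) := by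
    have : α ^ (-(n1 : ℤ)) * 2 ^ a1 * (4 * s) *
        (1 + (2:ℝ) ^ ((a2:ℤ) - a1) + (2:ℝ) ^ ((a3:ℤ) - a1))
        = α ^ (-(n1 : ℤ)) * ((((balancing n1 : ℤ):ℝ) + ((balancing n2 : ℤ):ℝ)) * (4 * s)) := by
      rw [hBsum, ← h2]; ring
    rw [this, add_mul, hbin1, hbin2]
    have hz : ∀ k : ℕ, (α⁻¹) ^ k = α ^ (-(k:ℤ)) := by
      intro k; rw [zpow_neg, zpow_natCast, inv_pow]
    rw [hz n1, hz n2, ← zpow_natCast α n1, ← zpow_natCast α n2]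
    have e1 : α ^ (-(n1:ℤ)) * α ^ ((n1:ℤ)) = 1 := by
      rw [← zpow_add₀ hαne]; simp
    have e2 : α ^ (-(n1:ℤ)) * α ^ (-(n1:ℤ)) = α ^ (-(2*(n1:ℤ))) := by
      rw [← zpow_add₀ hαne]; congr 1; ring
    have e3 : α ^ (-(n1:ℤ)) * α ^ ((n2:ℤ)) = α ^ ((n2:ℤ) - n1) := by
      rw [← zpow_add₀ hαne]; congr 1; ring
    have e4 : α ^ (-(n1:ℤ)) * α ^ (-(n2:ℤ)) = α ^ (-((n1:ℤ) + n2)) := by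
      rw [← zpow_add₀ hαne]; congr 1; ring
    linear_combination -e1 + e2 - e3 + e4
  rw [key]
  set A := α ^ ((n2:ℤ) - n1) with hA
  have hApos : 0 < A := zpow_pos hαpos _
  have hαle : 1 ≤ α := le_of_lt hα1
  have hle1 : α ^ (-(2 * n1 : ℤ)) ≤ A := by
    apply zpow_le_zpow_right₀ hαle; omega
  have hle2 : α ^ (-((n1:ℤ) + n2)) ≤ A := by
    apply zpow_le_zpow_right₀ hαle; omega
  have hpos1 : 0 < α ^ (-(2 * n1 : ℤ)) := zpow_pos hαpos _
  have hpos2 : 0 < α ^ (-((n1:ℤ) + n2)) := zpow_pos hαpos _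
  rw [abs_lt]
  constructor <;> nlinarith
end

section
/- If non-negative integers n1 ≥ n2 ≥ 0 and a1 ≥ a2 ≥ a3 ≥ 0 with n1 > 100 satisfy B_{n1} + B_{n2} = 2^{a1} + 2^{a2} + 2^{a3}, then |α^{n2}·2^{−a1}·(1 + α^{n1−n2})/(4√2) − 1| < 2.2 · 2^{a2−a1}, where α = 3 + 2√2. -/
/-!
Binet's formula `4√2 B_n = αⁿ - βⁿ` with `β = 3 - 2√2 = α⁻¹` turns
`αⁿ² (1 + αⁿ¹⁻ⁿ²) / (4√2) = (αⁿ¹ + αⁿ²) / (4√2)` into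
`B_{n₁} + B_{n₂} + E = 2^a₁ + 2^a₂ + 2^a₃ + E` with an error `E = (βⁿ¹ + βⁿ²) / (4√2)`
in `[0, 1/5)` once `n₁ ≥ 2`. Dividing by `2^a₁`, the distance to `1` is
`(2^a₂ + 2^a₃ + E) / 2^a₁ < (1 + 1 + 1/5) 2^a₂ / 2^a₁`.
-/

open Real

lemma balancing_succ_succ_cast (n : ℕ) :
    (balancing (n + 2) : ℝ) = 6 * balancing (n + 1) - balancing n := by
  rw [balancing]
  push_cast
  ring

lemma pow_succ_succ_of_sq_eq (x : ℝ) (hx : x ^ 2 = 6 * x - 1) (n : ℕ) :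
    x ^ (n + 2) = 6 * x ^ (n + 1) - x ^ n := by
  linear_combination x ^ n * hx

lemma balancing_binet (n : ℕ) :
    (3 + 2 * √2) ^ n - (3 - 2 * √2) ^ n = 4 * √2 * balancing n := by
  have hs : √2 ^ 2 = 2 := sq_sqrt (by norm_num)
  have hα := pow_succ_succ_of_sq_eq (3 + 2 * √2) (by linear_combination 4 * hs)
  have hβ := pow_succ_succ_of_sq_eq (3 - 2 * √2) (by linear_combination 4 * hs)
  induction n using Nat.twoStepInduction with
  | zero => simp [balancing]
  | one => simp [balancing]; ring
  | more n ih₀ ih₁ =>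
    rw [hα, hβ, balancing_succ_succ_cast]
    linear_combination 6 * ih₁ - ih₀

lemma three_sub_two_mul_sqrt_two_pos : 0 < 3 - 2 * √2 := by
  nlinarith [sq_sqrt (show (0 : ℝ) ≤ 2 by norm_num), sqrt_nonneg 2]

lemma three_sub_two_mul_sqrt_two_lt : 3 - 2 * √2 < 0.172 := by
  nlinarith [sq_sqrt (show (0 : ℝ) ≤ 2 by norm_num), sqrt_nonneg 2]

lemma conj_pow_add_conj_pow_div_lt {m : ℕ} (hm : 2 ≤ m) (n : ℕ) :
    ((3 - 2 * √2) ^ m + (3 - 2 * √2) ^ n) / (4 * √2) < 1 / 5 := by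
  have hβ₀ := three_sub_two_mul_sqrt_two_pos
  have hβ₁ := three_sub_two_mul_sqrt_two_lt
  have hβm : (3 - 2 * √2) ^ m ≤ (3 - 2 * √2) ^ 2 :=
    pow_le_pow_of_le_one hβ₀.le (by linarith) hm
  have hβn : (3 - 2 * √2) ^ n ≤ 1 := pow_le_one₀ hβ₀.le (by linarith)
  have hs : 1.414 < √2 := by
    rw [lt_sqrt (by norm_num)]
    norm_num
  rw [div_lt_iff₀ (by positivity)]
  nlinarith

lemma abs_two_pow_sum_mul_zpow_sub_one_lt {a₁ a₂ a₃ : ℕ} (ha : a₃ ≤ a₂) {E : ℝ}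
    (hE₀ : 0 ≤ E) (hE : E < 1 / 5) :
    |(2 ^ a₁ + 2 ^ a₂ + 2 ^ a₃ + E) * (2 : ℝ) ^ (-(a₁ : ℤ)) - 1| <
      2.2 * (2 : ℝ) ^ ((a₂ : ℤ) - a₁) := by
  have h₁ : (0 : ℝ) < 2 ^ a₁ := by positivity
  have h₂ : (1 : ℝ) ≤ 2 ^ a₂ := one_le_pow₀ (by norm_num)
  have h₃ : (2 : ℝ) ^ a₃ ≤ 2 ^ a₂ := pow_le_pow_right₀ (by norm_num) ha
  rw [zpow_neg, zpow_sub₀ (by norm_num), zpow_natCast, zpow_natCast,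
    show (2 ^ a₁ + 2 ^ a₂ + 2 ^ a₃ + E) * ((2 : ℝ) ^ a₁)⁻¹ - 1 = (2 ^ a₂ + 2 ^ a₃ + E) / 2 ^ a₁ by
      field_simp; ring,
    abs_of_nonneg (by positivity), mul_div_assoc']
  gcongr
  linarith

theorem balancing_linear_form_bound_case2_general (n1 n2 a1 a2 a3 : ℕ)
    (ha23 : a3 ≤ a2) (hn1 : 100 < n1)
    (heq : balancing n1 + balancing n2 = 2 ^ a1 + 2 ^ a2 + 2 ^ a3) :
    |(3 + 2 * Real.sqrt 2) ^ n2 * (2 : ℝ) ^ (-(a1 : ℤ)) *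
        ((1 + (3 + 2 * Real.sqrt 2) ^ ((n1 : ℤ) - n2)) / (4 * Real.sqrt 2)) - 1| <
      2.2 * (2 : ℝ) ^ ((a2 : ℤ) - a1) := by
  have hα : (3 + 2 * √2) ^ n2 * (1 + (3 + 2 * √2) ^ ((n1 : ℤ) - n2)) =
      (3 + 2 * √2) ^ n1 + (3 + 2 * √2) ^ n2 := by
    rw [mul_add, ← zpow_natCast, ← zpow_add₀ (by positivity), add_sub_cancel, zpow_natCast,
      zpow_natCast, mul_one, add_comm]
  have hsum : (2 : ℝ) ^ a1 + 2 ^ a2 + 2 ^ a3 = balancing n1 + balancing n2 := by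
    exact_mod_cast heq.symm
  have hE₀ : 0 ≤ ((3 - 2 * √2) ^ n1 + (3 - 2 * √2) ^ n2) / (4 * √2) := by
    have := three_sub_two_mul_sqrt_two_pos
    positivity
  convert abs_two_pow_sum_mul_zpow_sub_one_lt ha23 hE₀
    (conj_pow_add_conj_pow_div_lt (by omega : 2 ≤ n1) n2) using 3
  rw [hsum, mul_right_comm, ← mul_div_assoc, hα]
  congr 1
  field_simp
  linear_combination balancing_binet n1 + balancing_binet n2

theorem balancing_linear_form_bound_case2 (n1 n2 a1 a2 a3 : ℕ)
    (hn : n2 ≤ n1) (ha12 : a2 ≤ a1) (ha23 : a3 ≤ a2) (hn1 : 100 < n1)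
    (heq : balancing n1 + balancing n2 = 2 ^ a1 + 2 ^ a2 + 2 ^ a3) :
    |(3 + 2 * Real.sqrt 2) ^ n2 * (2 : ℝ) ^ (-(a1 : ℤ)) *
        ((1 + (3 + 2 * Real.sqrt 2) ^ ((n1 : ℤ) - n2)) / (4 * Real.sqrt 2)) - 1| <
      2.2 * (2 : ℝ) ^ ((a2 : ℤ) - a1) :=
  balancing_linear_form_bound_case2_general n1 n2 a1 a2 a3 ha23 hn1 heq
end

section
/- Let M be a positive integer, let τ be an irrational real number, and let p/q be a convergent of the continued fraction expansion of τ with q > 6M. Let A, B, μ be real numbers with A > 0 and B > 1, and set ε := ‖μq‖ − M·‖τq‖, where ‖x‖ denotes the distance from x to the nearest integer. If ε > 0, then there is no solution in positive integers u, v, w to the inequality 0 < |uτ − v + μ| < A·B^{−w} with u ≤ M and w ≥ log(Aq/ε)/log B. -/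
/-!
If `|uτ - v + μ| = δ`, then `μq` lies within `qδ + u‖τq‖` of the integer `qv - u·round(τq)`, so
`‖μq‖ ≤ qδ + M‖τq‖`, i.e. `ε ≤ qδ`. The lower bound on `w` gives `qA B^{-w} ≤ ε`, contradicting
`δ < A B^{-w}`.
-/

/-- The distance from a real number to the nearest integer. -/
noncomputable def distNearestInt (x : ℝ) : ℝ := |x - round x|

lemma distNearestInt_nonneg (x : ℝ) : 0 ≤ distNearestInt x := abs_nonneg _

lemma distNearestInt_le_abs_sub_int (x : ℝ) (n : ℤ) : distNearestInt x ≤ |x - n| :=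
  round_le x n

lemma distNearestInt_mul_le (τ μ : ℝ) (q u : ℕ) (v : ℤ) :
    distNearestInt (μ * q) ≤ q * |u * τ - v + μ| + u * distNearestInt (τ * q) := by
  calc distNearestInt (μ * q)
      ≤ |μ * q - ((q * v - u * round (τ * q) : ℤ) : ℝ)| := distNearestInt_le_abs_sub_int _ _
    _ = |q * (u * τ - v + μ) - u * (τ * q - round (τ * q))| := by push_cast; congr 1; ring
    _ ≤ |q * (u * τ - v + μ)| + |u * (τ * q - round (τ * q))| := abs_sub _ _
    _ = q * |u * τ - v + μ| + u * distNearestInt (τ * q) := by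
      rw [abs_mul, abs_mul, Nat.abs_cast, Nat.abs_cast, distNearestInt]

lemma le_pow_of_log_div_log_le {B C : ℝ} {n : ℕ} (hB : 1 < B) (hC : 0 < C)
    (hn : Real.log C / Real.log B ≤ n) : C ≤ B ^ n := by
  have hlog : Real.log C ≤ Real.log (B ^ n) := by
    rwa [Real.log_pow, ← div_le_iff₀ (Real.log_pos hB)]
  exact (Real.log_le_log_iff hC (pow_pos (zero_lt_one.trans hB) n)).mp hlog

theorem baker_davenport_reduction_general (M : ℕ) (τ : ℝ)
    (q : ℕ) (hq : 0 < q)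
    (A B μ : ℝ) (hA : 0 < A) (hB : 1 < B)
    (ε : ℝ) (hε : ε = distNearestInt (μ * q) - M * distNearestInt (τ * q)) (hεpos : 0 < ε) :
    ¬ ∃ u v w : ℕ, 0 < u ∧ 0 < v ∧ 0 < w ∧ u ≤ M ∧
        Real.log (A * q / ε) / Real.log B ≤ w ∧
        0 < |(u : ℝ) * τ - v + μ| ∧ |(u : ℝ) * τ - v + μ| < A * B ^ (-(w : ℤ)) := by
  rintro ⟨u, v, w, -, -, -, huM, hw, -, hsmall⟩
  have hq' : (0 : ℝ) < q := by exact_mod_cast hq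
  have hBw : 0 < B ^ w := pow_pos (zero_lt_one.trans hB) w
  have hpow : A * q / ε ≤ B ^ w := le_pow_of_log_div_log_le hB (by positivity) hw
  have hupper : q * |(u : ℝ) * τ - v + μ| < ε := by
    calc q * |(u : ℝ) * τ - v + μ| < q * (A * B ^ (-(w : ℤ))) := by gcongr
      _ = A * q / B ^ w := by rw [zpow_neg, zpow_natCast]; ring
      _ ≤ ε := by rw [div_le_iff₀' hBw]; exact (div_le_iff₀ hεpos).mp hpow
  have hlower : ε ≤ q * |(u : ℝ) * τ - v + μ| := by
    have hu : (u : ℝ) * distNearestInt (τ * q) ≤ M * distNearestInt (τ * q) := by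
      gcongr
      exact distNearestInt_nonneg _
    have := distNearestInt_mul_le τ μ q u v
    push_cast at this
    linarith
  linarith

theorem baker_davenport_reduction (M : ℕ) (hM : 0 < M) (τ : ℝ) (hτ : Irrational τ)
    (p : ℤ) (q : ℕ) (hq : 0 < q)
    (hconv : ∃ i : ℕ, (GenContFract.of τ).convs i = (p : ℝ) / q)
    (hq6M : 6 * M < q) (A B μ : ℝ) (hA : 0 < A) (hB : 1 < B)
    (ε : ℝ) (hε : ε = distNearestInt (μ * q) - M * distNearestInt (τ * q)) (hεpos : 0 < ε) :
    ¬ ∃ u v w : ℕ, 0 < u ∧ 0 < v ∧ 0 < w ∧ u ≤ M ∧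
        Real.log (A * q / ε) / Real.log B ≤ w ∧
        0 < |(u : ℝ) * τ - v + μ| ∧ |(u : ℝ) * τ - v + μ| < A * B ^ (-(w : ℤ)) :=
  baker_davenport_reduction_general M τ q hq A B μ hA hB ε hε hεpos
end
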